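/- A sequent is derivable in L^∘ if and only if it is derivable in the modified calculus L^∘_2, which is obtained from L^∘ by adding the rules (/→)_2: from Γ,E,Δ→C, Π→D and Ψ→A infer Γ,Π,(D\E)/A,Ψ,Δ→C; (→/)_2: from D,Π,A→E infer Π→(D\E)/A; (·→)_2: from Γ,D,E,B,Δ→C infer Γ,(D·E)·B,Δ→C; (→·)_2: from Π→D, Ψ→E and Ξ→B infer Π,Ψ,Ξ→(D·E)·B, and by forbidding: applications of (/→) whose principal type B/A has B of the form D\E; applications of (→·) producing A·B with A of the form D·E; applications of (→/) producing B/A with B of the form D\E; and applications of (·→) on a type A·B with A of the form D·E. -/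

import Mathlib

/-- Types of the Lambek calculus with the cyclic shift `L^∘`, built from
primitive types `P` by `\` (`ldiv A B = A \ B`), `/` (`rdiv B A = B / A`),
`·` (`mul`) and the cyclic shift `^∘` (`circ`). -/
inductive Fm (P : Type) : Type
  | prim : P → Fm P
  | ldiv : Fm P → Fm P → Fm P
  | rdiv : Fm P → Fm P → Fm P
  | mul  : Fm P → Fm P → Fm P
  | circ : Fm P → Fm P
deriving DecidableEq

open Fm

/-- Derivability of sequents in the Lambek calculus with the cyclic shift `L^∘`.
The Boolean flag indicates whether the rule (cut) may be used:
`Dv P true` is `L^∘` (with cut), `Dv P false` is its cut-free part. -/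
inductive Dv (P : Type) : Bool → List (Fm P) → Fm P → Prop
  | ax (c : Bool) (A : Fm P) :
      Dv P c [A] A
  | ldivL (c : Bool) (Γ Δ Pi : List (Fm P)) (A B C : Fm P) :
      Dv P c (Γ ++ B :: Δ) C → Dv P c Pi A → Pi ≠ [] →
      Dv P c (Γ ++ Pi ++ ldiv A B :: Δ) C
  | ldivR (c : Bool) (Pi : List (Fm P)) (A B : Fm P) :
      Dv P c (A :: Pi) B → Pi ≠ [] →
      Dv P c Pi (ldiv A B)
  | rdivL (c : Bool) (Γ Δ Pi : List (Fm P)) (A B C : Fm P) :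
      Dv P c (Γ ++ B :: Δ) C → Dv P c Pi A → Pi ≠ [] →
      Dv P c (Γ ++ rdiv B A :: (Pi ++ Δ)) C
  | rdivR (c : Bool) (Pi : List (Fm P)) (A B : Fm P) :
      Dv P c (Pi ++ [A]) B → Pi ≠ [] →
      Dv P c Pi (rdiv B A)
  | mulL (c : Bool) (Γ Δ : List (Fm P)) (A B C : Fm P) :
      Dv P c (Γ ++ A :: B :: Δ) C →
      Dv P c (Γ ++ mul A B :: Δ) C
  | mulR (c : Bool) (Pi Psi : List (Fm P)) (A B : Fm P) :
      Dv P c Pi A → Dv P c Psi B → Pi ≠ [] → Psi ≠ [] →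
      Dv P c (Pi ++ Psi) (mul A B)
  | circR (c : Bool) (Pi : List (Fm P)) (A : Fm P) :
      Dv P c Pi A →
      Dv P c Pi (circ A)
  | circL (c : Bool) (A B : Fm P) :
      Dv P c [B] (circ A) →
      Dv P c [circ B] (circ A)
  | circC (c : Bool) (Pi Psi : List (Fm P)) (A : Fm P) :
      Dv P c (Pi ++ Psi) (circ A) → Pi ≠ [] → Psi ≠ [] →
      Dv P c (Psi ++ Pi) (circ A)
  | cut (Γ Δ Pi : List (Fm P)) (A B : Fm P) :
      Dv P true Pi A → Dv P true (Γ ++ A :: Δ) B → Pi ≠ [] →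
      Dv P true (Γ ++ Pi ++ Δ) B

/-- The modified calculus `L^∘_2`: `L^∘` with the doubled rules `(/→)_2`,
`(→/)_2`, `(·→)_2`, `(→·)_2` added, and with applications of `(/→)` and
`(→/)` whose principal type `B/A` has `B` of the form `D\E`, as well as
applications of `(·→)` and `(→·)` whose principal type `A·B` has `A` of the
form `D·E`, forbidden. -/
inductive Dv2 (P : Type) : List (Fm P) → Fm P → Prop
  | ax (A : Fm P) :
      Dv2 P [A] A
  | ldivL (Γ Δ Pi : List (Fm P)) (A B C : Fm P) :
      Dv2 P (Γ ++ B :: Δ) C → Dv2 P Pi A → Pi ≠ [] →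
      Dv2 P (Γ ++ Pi ++ Fm.ldiv A B :: Δ) C
  | ldivR (Pi : List (Fm P)) (A B : Fm P) :
      Dv2 P (A :: Pi) B → Pi ≠ [] →
      Dv2 P Pi (Fm.ldiv A B)
  | rdivL (Γ Δ Pi : List (Fm P)) (A B C : Fm P) :
      (∀ D E : Fm P, B ≠ Fm.ldiv D E) →
      Dv2 P (Γ ++ B :: Δ) C → Dv2 P Pi A → Pi ≠ [] →
      Dv2 P (Γ ++ Fm.rdiv B A :: (Pi ++ Δ)) C
  | rdivR (Pi : List (Fm P)) (A B : Fm P) :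
      (∀ D E : Fm P, B ≠ Fm.ldiv D E) →
      Dv2 P (Pi ++ [A]) B → Pi ≠ [] →
      Dv2 P Pi (Fm.rdiv B A)
  | mulL (Γ Δ : List (Fm P)) (A B C : Fm P) :
      (∀ D E : Fm P, A ≠ Fm.mul D E) →
      Dv2 P (Γ ++ A :: B :: Δ) C →
      Dv2 P (Γ ++ Fm.mul A B :: Δ) C
  | mulR (Pi Psi : List (Fm P)) (A B : Fm P) :
      (∀ D E : Fm P, A ≠ Fm.mul D E) →
      Dv2 P Pi A → Dv2 P Psi B → Pi ≠ [] → Psi ≠ [] →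
      Dv2 P (Pi ++ Psi) (Fm.mul A B)
  | rdivL2 (Γ Δ Pi Psi : List (Fm P)) (D E A C : Fm P) :
      Dv2 P (Γ ++ E :: Δ) C → Dv2 P Pi D → Dv2 P Psi A → Pi ≠ [] → Psi ≠ [] →
      Dv2 P (Γ ++ Pi ++ Fm.rdiv (Fm.ldiv D E) A :: (Psi ++ Δ)) C
  | rdivR2 (Pi : List (Fm P)) (D E A : Fm P) :
      Dv2 P (D :: (Pi ++ [A])) E → Pi ≠ [] →
      Dv2 P Pi (Fm.rdiv (Fm.ldiv D E) A)
  | mulL2 (Γ Δ : List (Fm P)) (D E B C : Fm P) :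
      Dv2 P (Γ ++ D :: E :: B :: Δ) C →
      Dv2 P (Γ ++ Fm.mul (Fm.mul D E) B :: Δ) C
  | mulR2 (Pi Psi Xi : List (Fm P)) (D E B : Fm P) :
      Dv2 P Pi D → Dv2 P Psi E → Dv2 P Xi B → Pi ≠ [] → Psi ≠ [] → Xi ≠ [] →
      Dv2 P (Pi ++ Psi ++ Xi) (Fm.mul (Fm.mul D E) B)
  | circR (Pi : List (Fm P)) (A : Fm P) :
      Dv2 P Pi A →
      Dv2 P Pi (Fm.circ A)
  | circL (A B : Fm P) :
      Dv2 P [B] (Fm.circ A) →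
      Dv2 P [Fm.circ B] (Fm.circ A)
  | circC (Pi Psi : List (Fm P)) (A : Fm P) :
      Dv2 P (Pi ++ Psi) (Fm.circ A) → Pi ≠ [] → Psi ≠ [] →
      Dv2 P (Psi ++ Pi) (Fm.circ A)
  | cut (Γ Δ Pi : List (Fm P)) (A B : Fm P) :
      Dv2 P Pi A → Dv2 P (Γ ++ A :: Δ) B → Pi ≠ [] →
      Dv2 P (Γ ++ Pi ++ Δ) B

/-! `L^∘_2` differs from `L^∘` only in the rules for `/` and `·`. The new rules are derived in
`L^∘` by two consecutive applications of the old ones. Conversely, because `L^∘_2` has cut, the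
forbidden instances of the old rules are admissible in it: they reduce to the sequents
`(D\E)/A, Π → D\E` (by `(/→)_2` and `(→\)`), `D, D\E → E` (feeding `(→/)_2`) and `D, E → D·E`.
The last one is obtained by induction along the left spine of `D`: for `D = D₁·D₂`, rule
`(→·)_2` gives `D₁, D₂, E → (D₁·D₂)·E`, and `D₁, D₂` is folded back into `D₁·D₂` by the
unrestricted `(·→)` on the smaller type `D₁`. -/

namespace Dv2

variable {P : Type}

theorem mul_pair_and_mulL_of_ne_mul {A : Fm P} (hA : ∀ D E, A ≠ mul D E) :
    (∀ E, Dv2 P [A, E] (mul A E)) ∧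
      ∀ B Γ Δ C, Dv2 P (Γ ++ A :: B :: Δ) C → Dv2 P (Γ ++ mul A B :: Δ) C :=
  ⟨fun E => by simpa using mulR [A] [E] A E hA (ax A) (ax E) (by simp) (by simp),
    fun B Γ Δ C => mulL Γ Δ A B C hA⟩

theorem mul_pair_and_mulL (A : Fm P) :
    (∀ E, Dv2 P [A, E] (mul A E)) ∧
      ∀ B Γ Δ C, Dv2 P (Γ ++ A :: B :: Δ) C → Dv2 P (Γ ++ mul A B :: Δ) C := by
  induction A with
  | mul D E ihD _ =>
    refine ⟨fun F => ?_, fun B Γ Δ C h => ?_⟩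
    · have h3 : Dv2 P ([D] ++ [E] ++ [F]) (mul (mul D E) F) :=
        mulR2 [D] [E] [F] D E F (ax D) (ax E) (ax F) (by simp) (by simp) (by simp)
      simpa using ihD.2 E [] [F] _ (by simpa using h3)
    · have h' := cut Γ (B :: Δ) [D, E] (mul D E) C (ihD.1 E) h (by simp)
      exact mulL2 Γ Δ D E B C (by simpa using h')
  | _ => exact mul_pair_and_mulL_of_ne_mul fun _ _ h => by cases h

theorem mulL_general {Γ Δ : List (Fm P)} {A B C : Fm P}
    (h : Dv2 P (Γ ++ A :: B :: Δ) C) : Dv2 P (Γ ++ mul A B :: Δ) C :=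
  (mul_pair_and_mulL A).2 B Γ Δ C h

theorem mulR_general {Pi Psi : List (Fm P)} {A B : Fm P} (hA : Dv2 P Pi A) (hB : Dv2 P Psi B)
    (hPi : Pi ≠ []) (hPsi : Psi ≠ []) : Dv2 P (Pi ++ Psi) (mul A B) := by
  have hAB : Dv2 P ([] ++ A :: [B]) (mul A B) := (mul_pair_and_mulL A).1 B
  have hPiB : Dv2 P (Pi ++ B :: []) (mul A B) := by simpa using cut [] [B] Pi A _ hA hAB hPi
  simpa using cut Pi [] Psi B _ hB hPiB hPsi

theorem rdiv_cons {Pi : List (Fm P)} {A : Fm P} (B : Fm P) (hA : Dv2 P Pi A) (hPi : Pi ≠ []) :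
    Dv2 P (rdiv B A :: Pi) B := by
  by_cases hB : ∃ D E, B = ldiv D E
  · obtain ⟨D, E, rfl⟩ := hB
    have h := rdivL2 [] [] [D] Pi D E A E (ax E) (ax D) hA (by simp) hPi
    exact ldivR _ D E (by simpa using h) (by simp)
  · simp only [not_exists] at hB
    simpa using rdivL [] [] Pi A B B hB (ax B) hA hPi

theorem rdivL_general {Γ Δ Pi : List (Fm P)} {A B C : Fm P} (h : Dv2 P (Γ ++ B :: Δ) C)
    (hA : Dv2 P Pi A) (hPi : Pi ≠ []) : Dv2 P (Γ ++ rdiv B A :: (Pi ++ Δ)) C := by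
  simpa using cut Γ Δ (rdiv B A :: Pi) B C (rdiv_cons B hA hPi) h (by simp)

theorem rdivR_general {Pi : List (Fm P)} {A B : Fm P} (h : Dv2 P (Pi ++ [A]) B) (hPi : Pi ≠ []) :
    Dv2 P Pi (rdiv B A) := by
  by_cases hB : ∃ D E, B = ldiv D E
  · obtain ⟨D, E, rfl⟩ := hB
    have hDE : Dv2 P ([D] ++ ldiv D E :: []) E := by
      simpa using ldivL [] [] [D] D E E (ax E) (ax D) (by simp)
    have h' := cut [D] [] (Pi ++ [A]) (ldiv D E) E h hDE (by simp)
    exact rdivR2 Pi D E A (by simpa using h') hPi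
  · simp only [not_exists] at hB
    exact rdivR Pi A B hB h hPi

end Dv2

theorem Dv.toDv2 {P : Type} {c : Bool} {Γ : List (Fm P)} {B : Fm P} (h : Dv P c Γ B) :
    Dv2 P Γ B := by
  induction h with
  | ax _ A => exact .ax A
  | ldivL _ Γ Δ Pi A B C _ _ hPi ih ihA => exact .ldivL Γ Δ Pi A B C ih ihA hPi
  | ldivR _ Pi A B _ hPi ih => exact .ldivR Pi A B ih hPi
  | rdivL _ _ _ _ _ _ _ _ _ hPi ih ihA => exact Dv2.rdivL_general ih ihA hPi
  | rdivR _ _ _ _ _ hPi ih => exact Dv2.rdivR_general ih hPi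
  | mulL _ _ _ _ _ _ _ ih => exact Dv2.mulL_general ih
  | mulR _ _ _ _ _ _ _ hPi hPsi ihA ihB => exact Dv2.mulR_general ihA ihB hPi hPsi
  | circR _ Pi A _ ih => exact .circR Pi A ih
  | circL _ A B _ ih => exact .circL A B ih
  | circC _ Pi Psi A _ hPi hPsi ih => exact .circC Pi Psi A ih hPi hPsi
  | cut Γ Δ Pi A B _ _ hPi ihA ih => exact .cut Γ Δ Pi A B ihA ih hPi

theorem Dv2.toDv {P : Type} {Γ : List (Fm P)} {B : Fm P} (h : Dv2 P Γ B) :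
    Dv P true Γ B := by
  induction h with
  | ax A => exact .ax true A
  | ldivL Γ Δ Pi A B C _ _ hPi ih ihA => exact .ldivL true Γ Δ Pi A B C ih ihA hPi
  | ldivR Pi A B _ hPi ih => exact .ldivR true Pi A B ih hPi
  | rdivL Γ Δ Pi A B C _ _ _ hPi ih ihA => exact .rdivL true Γ Δ Pi A B C ih ihA hPi
  | rdivR Pi A B _ _ hPi ih => exact .rdivR true Pi A B ih hPi
  | mulL Γ Δ A B C _ _ ih => exact .mulL true Γ Δ A B C ih
  | mulR Pi Psi A B _ _ _ hPi hPsi ihA ihB => exact .mulR true Pi Psi A B ihA ihB hPi hPsi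
  | rdivL2 Γ Δ Pi Psi D E A C _ _ _ hPi hPsi ih ihD ihA =>
    have hE := Dv.ldivL true Γ Δ Pi D E C ih ihD hPi
    have h := Dv.rdivL true (Γ ++ Pi) Δ Psi A (ldiv D E) C (by simpa using hE) ihA hPsi
    simpa using h
  | rdivR2 Pi D E A _ hPi ih =>
    exact .rdivR true Pi A _ (.ldivR true _ D E ih (by simp)) hPi
  | mulL2 Γ Δ D E B C _ ih =>
    exact .mulL true Γ Δ (mul D E) B C (.mulL true Γ (B :: Δ) D E C ih)
  | mulR2 Pi Psi Xi D E B _ _ _ hPi hPsi hXi ihD ihE ihB =>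
    have hDE := Dv.mulR true Pi Psi D E ihD ihE hPi hPsi
    exact .mulR true (Pi ++ Psi) Xi _ B hDE ihB (by simp [hPi]) hXi
  | circR Pi A _ ih => exact .circR true Pi A ih
  | circL A B _ ih => exact .circL true A B ih
  | circC Pi Psi A _ hPi hPsi ih => exact .circC true Pi Psi A ih hPi hPsi
  | cut Γ Δ Pi A B _ _ hPi ihA ih => exact .cut Γ Δ Pi A B ihA ih hPi

/-- A sequent is derivable in `L^∘` iff it is derivable in the modified
calculus `L^∘_2`. -/
theorem Lcirc_iff_Lcirc2 (P : Type) (Γ : List (Fm P)) (B : Fm P) :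
    Dv P true Γ B ↔ Dv2 P Γ B :=
  ⟨Dv.toDv2, Dv2.toDv⟩
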